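/- In the free simplicial resolution of the category [n], the simplicial hom-set from i to j is given by F_•[n](i,j) ≅ Δ[1]^{j−i−1} (the (j−i−1)-fold product of the standard simplicial 1-simplex) when i < j, a point when i = j, and empty when i > j. -/

import Mathlib

open CategoryTheory

universe u

/- The standard (Cordier/Dwyer–Kan) free resolution `F_•C` of a category `C`, where
`F_nC = F^{n+1}C` and `FC` is the category whose morphisms are words of composable
non-identity morphisms of `C`, composed by concatenation. -/

/-- Words (paths) of composable non-identity morphisms of a category. -/
inductive NIP {C : Type u} [Category.{u} C] : C → C → Type u
  | nil (a : C) : NIP a a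
  | cons {a b c : C} (p : NIP a b) (f : b ⟶ c)
      (hf : ¬∃ h : b = c, f = eqToHom h) : NIP a c

/-- Concatenation of words. -/
def NIP.comp {C : Type u} [Category.{u} C] :
    {a b c : C} → NIP a b → NIP b c → NIP a c
  | _, _, _, p, .nil _ => p
  | _, _, _, p, .cons q f hf => .cons (p.comp q) f hf

/-- The free category `FC` on a category `C`: same objects, morphisms the words of
composable non-identity morphisms of `C`, composed by concatenation (with the
empty word as identity). -/
@[reducible] def FreeNI (C : Type u) [Category.{u} C] : Type u := C

instance FreeNI.categoryStruct (C : Type u) [Category.{u} C] :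
    CategoryStruct.{u} (FreeNI C) where
  Hom a b := NIP (C := C) a b
  id a := NIP.nil a
  comp := fun {a b c} p q => NIP.comp (C := C) p q

theorem NIP.comp_nil {C : Type u} [Category.{u} C] {a b : C} (p : NIP a b) :
    NIP.comp p (.nil b) = p := by simp [NIP.comp]

theorem NIP.nil_comp {C : Type u} [Category.{u} C] {a b : C} (p : NIP a b) :
    NIP.comp (.nil a) p = p := by
  induction p with
  | nil => simp [NIP.comp]
  | cons q f hf ih => simp [NIP.comp, ih]

theorem NIP.comp_assoc {C : Type u} [Category.{u} C] {a b c d : C}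
    (p : NIP a b) (q : NIP b c) (r : NIP c d) :
      NIP.comp (NIP.comp p q) r = NIP.comp p (NIP.comp q r) := by
  induction r with
  | nil => simp [NIP.comp]
  | cons r' f hf ih => simp [NIP.comp, ih]

instance FreeNI.category (C : Type u) [Category.{u} C] : Category.{u} (FreeNI C) where
  id_comp := fun {a b} p => NIP.nil_comp p
  comp_id := fun {a b} p => NIP.comp_nil p
  assoc := fun {a b c d} p q r => NIP.comp_assoc p q r

/-- The category structure of the iterated free category `F^kC` (the objects of
`F^kC` are the objects of `C`). -/
def iterFreeCat (C : Type u) : ℕ → Category.{u} C → Category.{u} C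
  | 0, inst => inst
  | k + 1, inst => (@FreeNI.category C (iterFreeCat C k inst) : Category.{u} C)

/-- The morphisms from `i` to `j` in `F^{m+1}[n]`, i.e. the `m`-simplices of the
simplicial hom-set `F_•[n](i,j)` of the free simplicial resolution of the poset
category `[n] = {0 < 1 < ⋯ < n}`. -/
def resolutionHom (n m : ℕ) (i j : Fin (n + 1)) : Type :=
  @Quiver.Hom (Fin (n + 1))
    (@CategoryStruct.toQuiver _ (@Category.toCategoryStruct _
      (iterFreeCat (Fin (n + 1)) (m + 1) inferInstance))) i j

/-!
In `F^k[n]` there are exactly `(k + 1) ^ (j - i - 1)` morphisms `i ⟶ j` for `i ≤ j` and none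
otherwise. Indeed, if a category `C` on `[n]` has `M ^ (b - a - 1)` morphisms `a ⟶ b` for `a ≤ b`,
a word `a ⟶ b` in `FC` is either empty or a word `a ⟶ c` followed by a non-identity letter
`c ⟶ b` with `c < b`, so the counts `W a b` in `FC` satisfy
`W a b = [a = b] + ∑_{a ≤ c < b} W a c * M ^ (b - c - 1)`, which is solved by
`(M + 1) ^ (b - a - 1)` (a geometric sum). A monotone map `[m] → [1]` is determined by the number
of points sent to `0`, so `Δ[1]` has `m + 2` simplices in degree `m`, and the two sides of each
claimed bijection have the same finite cardinality.
-/

section Counting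

open Finset

theorem Nat.sum_Ico_succ_pow_mul_pow (M : ℕ) {a b : ℕ} (hab : a < b) :
    ∑ c ∈ Ico a b, (M + 1) ^ (c - a - 1) * M ^ (b - c - 1) = (M + 1) ^ (b - a - 1) := by
  obtain ⟨N, rfl⟩ : ∃ N, b = a + N + 1 := ⟨b - a - 1, by omega⟩
  have hN : a + N + 1 - a - 1 = N := by omega
  rw [hN, sum_Ico_eq_sum_range, show a + N + 1 - a = N + 1 by omega, sum_range_succ',
    add_comm M 1, ← geom_sum₂_mul_add 1 M N, mul_one]
  congr 1
  · refine sum_congr rfl fun t ht => ?_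
    rw [mem_range] at ht
    congr 2 <;> omega
  · simp [hN]

theorem OrderHom.eq_zero_iff_lt_card_zeros {k : ℕ} (f : Fin k →o Fin 2) (q : Fin k) :
    f q = 0 ↔ (q : ℕ) < #{p | f p = 0} := by
  constructor
  · intro hq
    have hsub : Iic q ⊆ univ.filter (f · = 0) := fun p hp => by
      simp only [mem_filter, mem_univ, true_and]
      exact Fin.le_zero_iff.mp (hq ▸ f.mono (mem_Iic.mp hp))
    have := card_le_card hsub
    rw [Fin.card_Iic] at this
    omega
  · intro hlt
    by_contra hq
    have hsub : univ.filter (f · = 0) ⊆ Iio q := fun p hp => by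
      simp only [mem_filter, mem_univ, true_and] at hp
      exact mem_Iio.mpr (lt_of_not_ge fun hqp => hq (Fin.le_zero_iff.mp (hp ▸ f.mono hqp)))
    have := card_le_card hsub
    rw [Fin.card_Iio] at this
    omega

def orderHomFinTwoEquiv (m : ℕ) : (Fin (m + 1) →o Fin 2) ≃ Fin (m + 2) where
  toFun f := ⟨#{p | f p = 0}, Nat.lt_succ_of_le ((card_filter_le _ _).trans_eq (by simp))⟩
  invFun t := ⟨fun q => if (q : ℕ) < t then 0 else 1, fun p q hpq => by
    dsimp only
    split_ifs <;> first | exact le_rfl | exact Fin.zero_le _ | omega⟩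
  left_inv f := by
    refine OrderHom.ext _ _ (funext fun q => ?_)
    change (if (q : ℕ) < #{p | f p = 0} then 0 else 1) = f q
    simp only [← f.eq_zero_iff_lt_card_zeros]
    split_ifs with hq
    · exact hq.symm
    · exact (Fin.eq_one_of_ne_zero (f q) hq).symm
  right_inv t := by
    ext
    change #{q : Fin (m + 1) | (if (q : ℕ) < t then (0 : Fin 2) else 1) = 0} = (t : ℕ)
    simp only [ite_eq_left_iff, one_ne_zero, imp_false, not_not, Fin.card_filter_val_lt]
    omega

end Counting

open Cardinal

universe v

theorem Cardinal.mk_sigma_eq_natCast_sum {ι : Type u} [Fintype ι] {β : ι → Type v} {w : ι → ℕ}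
    (h : ∀ i, #(β i) = w i) : #(Σ i, β i) = ((∑ i, w i : ℕ) : Cardinal) := by
  rw [mk_sigma_congrRight (g := fun i => ULift.{v} (Fin (w i))) fun i => by simp [h i],
    mk_fintype, Fintype.card_sigma]
  simp

theorem mk_orderHom_fin_two (m : ℕ) : #(Fin (m + 1) →o Fin 2) = m + 2 := by
  rw [mk_congr (orderHomFinTwoEquiv m), mk_fin]
  push_cast
  rfl

section NonIdentity

variable {C : Type u} [cat : Category.{u} C]

/-- `cat` is named because instance search would find `FreeNI.categoryStruct C` for
`CategoryStruct C`; this is the side condition of `NIP.cons`. -/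
abbrev NonIdHom (a b : C) : Type u :=
  {f : a ⟶ b // ¬∃ h : a = b, f = @eqToHom C cat.toCategoryStruct a b h}

def NIP.equivSumSigma (a b : C) : NIP a b ≃ PLift (a = b) ⊕ Σ c, NIP a c × NonIdHom c b where
  toFun
    | .nil _ => .inl ⟨rfl⟩
    | .cons p f hf => .inr ⟨_, p, f, hf⟩
  invFun
    | .inl ⟨h⟩ => h ▸ .nil a
    | .inr ⟨_, p, f, hf⟩ => .cons p f hf
  left_inv p := by cases p <;> rfl
  right_inv x := by rcases x with ⟨⟨rfl⟩⟩ | ⟨c, p, f, hf⟩ <;> rfl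

theorem NIP.mk_eq [DecidableEq C] (a b : C) :
    #(NIP a b) = (if a = b then 1 else 0) + #(Σ c, NIP a c × NonIdHom c b) := by
  rw [mk_congr (equivSumSigma a b), mk_sum]
  by_cases hab : a = b <;> simp [hab]

end NonIdentity

section OrdinalCount

variable {n : ℕ}

/-- For `M = k + 1` this is the number of morphisms `a ⟶ b` in `F^k[n]`. Truncated subtraction
makes it `1` for `b = a` as well as for `b = a + 1`. -/
def ordinalHomCount (M : ℕ) (a b : Fin (n + 1)) : ℕ :=
  if a ≤ b then M ^ ((b : ℕ) - a - 1) else 0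

theorem ordinalHomCount_succ (M : ℕ) (a b : Fin (n + 1)) :
    ordinalHomCount (M + 1) a b =
      (if a = b then 1 else 0) +
        ∑ c ∈ Finset.Ico a b, (M + 1) ^ ((c : ℕ) - a - 1) * M ^ ((b : ℕ) - c - 1) := by
  unfold ordinalHomCount
  rcases lt_trichotomy a b with hab | rfl | hba
  · rw [if_pos hab.le, if_neg hab.ne, zero_add, ← Nat.sum_Ico_succ_pow_mul_pow M hab,
      ← Fin.map_valEmbedding_Ico, Finset.sum_map]
    rfl
  · simp
  · simp [hba.not_ge, hba.ne', Finset.Ico_eq_empty_of_le hba.le]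

variable [cat : Category.{0} (Fin (n + 1))]

def HasOrdinalHomCount (M : ℕ) : Prop :=
  ∀ a b : Fin (n + 1), #(a ⟶ b) = ordinalHomCount M a b

theorem HasOrdinalHomCount.mk_nonIdHom {M : ℕ} (h : HasOrdinalHomCount (n := n) M)
    (a b : Fin (n + 1)) : #(NonIdHom a b) = if a < b then M ^ ((b : ℕ) - a - 1) else 0 := by
  rcases lt_trichotomy a b with hab | rfl | hba
  · rw [if_pos hab, mk_congr (Equiv.subtypeUnivEquiv fun f ⟨hab', _⟩ => hab.ne hab'), h,
      ordinalHomCount, if_pos hab.le]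
  · have : Subsingleton (a ⟶ a) := le_one_iff_subsingleton.mp (by simp [h a a, ordinalHomCount])
    rw [if_neg (lt_irrefl a), Nat.cast_zero, mk_eq_zero_iff]
    exact ⟨fun ⟨f, hf⟩ => hf ⟨rfl, Subsingleton.elim _ _⟩⟩
  · have : IsEmpty (a ⟶ b) := mk_eq_zero_iff.mp (by simp [h a b, ordinalHomCount, hba.not_ge])
    rw [if_neg hba.not_gt, Nat.cast_zero, mk_eq_zero_iff]
    infer_instance

theorem HasOrdinalHomCount.freeNI {M : ℕ} (h : HasOrdinalHomCount (n := n) M) :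
    @HasOrdinalHomCount n (@FreeNI.category _ cat) (M + 1) := by
  intro a b
  induction b using WellFoundedLT.induction with
  | _ b ih =>
  have hword : ∀ c, #(NIP a c × NonIdHom c b) =
      ↑(if c ∈ Finset.Ico a b then (M + 1) ^ ((c : ℕ) - a - 1) * M ^ ((b : ℕ) - c - 1)
        else 0) := by
    intro c
    rw [mk_prod, lift_id, lift_id, h.mk_nonIdHom]
    by_cases hcb : c < b
    · rw [show #(NIP a c) = _ from ih c hcb, ordinalHomCount]
      by_cases hac : a ≤ c <;> simp [hac, hcb]
    · simp [hcb]
  change #(NIP a b) = _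
  rw [NIP.mk_eq, mk_sigma_eq_natCast_sum hword, Finset.sum_ite_mem, Finset.univ_inter,
    ordinalHomCount_succ]
  by_cases hab : a = b <;> simp [hab]

end OrdinalCount

theorem hasOrdinalHomCount_iterFreeCat (n k : ℕ) :
    @HasOrdinalHomCount n (iterFreeCat (Fin (n + 1)) k inferInstance) (k + 1) := by
  induction k with
  | zero =>
    intro a b
    unfold ordinalHomCount
    split_ifs with hab
    · change #(ULift (PLift (a ≤ b))) = _
      simp [hab]
    · exact mk_eq_zero_iff.mpr ⟨fun f => hab (leOfHom f)⟩
  | succ k ih => exact @HasOrdinalHomCount.freeNI n (iterFreeCat _ k inferInstance) (k + 1) ih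

/-- In the free simplicial resolution `F_•[n]`, the simplicial hom-set from `i` to
`j` is `Δ[1]^{j-i-1}` when `i < j` (levelwise: the `m`-simplices of `F_•[n](i,j)`
biject with the `m`-simplices of `Δ[1]^{j-i-1}`, i.e. with `(j-i-1)`-tuples of
monotone maps `[m] → [1]`), a point when `i = j`, and empty when `i > j`. -/
theorem freeResolution_hom_of_ordinal (n m : ℕ) (i j : Fin (n + 1)) :
    (i < j → Nonempty (resolutionHom n m i j ≃
      (Fin ((j : ℕ) - (i : ℕ) - 1) → (Fin (m + 1) →o Fin 2)))) ∧
    (i = j → Nonempty (resolutionHom n m i j ≃ PUnit)) ∧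
    (j < i → IsEmpty (resolutionHom n m i j)) := by
  have hcard : #(resolutionHom n m i j) = ordinalHomCount (m + 2) i j :=
    hasOrdinalHomCount_iterFreeCat n (m + 1) i j
  refine ⟨fun hij => Cardinal.eq.mp ?_, fun hij => ?_, fun hji => mk_eq_zero_iff.mp ?_⟩
  · rw [hcard, ordinalHomCount, if_pos hij.le, mk_arrow, mk_orderHom_fin_two, mk_fin]
    simp
  · subst hij
    obtain ⟨_, ⟨f⟩⟩ := eq_one_iff_unique.mp (by simpa [ordinalHomCount] using hcard)
    exact ⟨@Equiv.equivPUnit _ (uniqueOfSubsingleton f)⟩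
  · simp [hcard, ordinalHomCount, hji.not_ge]
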